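/- Every D-semianalytic subset of a reduced affinoid variety X is subanalytic in X. -/

import Mathlib

/-!  Prelude: rigid-analytic basics over a complete non-archimedean
algebraically closed field `K`. -/

open scoped BoundedContinuousFunction

noncomputable section

namespace RigidQE

variable (K : Type) [NormedField K] [CompleteSpace K] [IsAlgClosed K] [IsUltrametricDist K]

/-- The valuation ring `R = {x : K | ‖x‖ ≤ 1}` of `K`. -/
def Ro : Subring K where
  carrier := {x | ‖x‖ ≤ 1}
  zero_mem' := by simp
  one_mem' := by simp
  add_mem' := fun {a b} ha hb => le_trans (IsUltrametricDist.norm_add_le_max a b) (max_le ha hb)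
  neg_mem' := fun {a} ha => by simpa using ha
  mul_mem' := fun {a b} ha hb => le_trans (norm_mul_le a b)
    (by simpa using mul_le_one₀ ha (norm_nonneg b) hb)

/-- The maximal ideal `℘ = {x : K | ‖x‖ < 1}` of the valuation ring. -/
def RoMax : Ideal (Ro K) where
  carrier := {x | ‖(x : K)‖ < 1}
  zero_mem' := by simp
  add_mem' := fun {a b} ha hb =>
    lt_of_le_of_lt (IsUltrametricDist.norm_add_le_max (a : K) (b : K)) (max_lt ha hb)
  smul_mem' := fun c x hx => by
    have h1 : ‖(c : K)‖ ≤ 1 := c.2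
    have : ‖(c : K) * (x : K)‖ ≤ 1 * ‖(x : K)‖ := le_trans (norm_mul_le _ _) (by gcongr)
    simpa using lt_of_le_of_lt (by simpa using this) hx

/-- The closed unit polydisc `R^m ⊆ K^m`. -/
def UnitBall (m : ℕ) : Set (Fin m → K) := {x | ∀ i, ‖x i‖ ≤ 1}

/-- The `i`-th coordinate function on the unit polydisc, as a bounded continuous function. -/
def coordFn (m : ℕ) (i : Fin m) : (UnitBall K m) →ᵇ K :=
  BoundedContinuousFunction.ofNormedAddCommGroup (fun x => x.1 i)
    ((continuous_apply i).comp continuous_subtype_val) 1 (fun x => x.2 i)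

/-- The Tate algebra `K⟨S₁,…,Sₘ⟩` of strictly convergent power series, realised concretely
as the closure, with respect to the supremum norm, of the algebra of polynomial functions
on the unit polydisc. -/
def TateAlg (m : ℕ) : Subalgebra K ((UnitBall K m) →ᵇ K) :=
  (Algebra.adjoin K (Set.range (coordFn K m))).topologicalClosure

end RigidQE

end

noncomputable section
namespace RigidQE

variable (K : Type) [NormedField K] [CompleteSpace K] [IsAlgClosed K] [IsUltrametricDist K]

/-- The projection `R^{m+N} → R^m` on the first `m` coordinates. -/
def ballProj (m N : ℕ) (z : UnitBall K (m + N)) : UnitBall K m :=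
  ⟨fun i => z.1 (Fin.castAdd N i), fun i => z.2 _⟩

lemma ballProj_continuous (m N : ℕ) : Continuous (ballProj K m N) := by
  apply Continuous.subtype_mk
  exact continuous_pi fun i => (continuous_apply _).comp continuous_subtype_val

/-- Pullback of bounded functions along the projection of polydiscs. -/
def ballPull (m N : ℕ) : ((UnitBall K m) →ᵇ K) →ₐ[K] ((UnitBall K (m + N)) →ᵇ K) where
  toFun f := f.compContinuous ⟨ballProj K m N, ballProj_continuous K m N⟩
  map_one' := by ext z; simp
  map_mul' f g := by ext z; simp
  map_zero' := by ext z; simp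
  map_add' f g := by ext z; simp
  commutes' c := by ext z; simp

lemma ballPull_lipschitz (m N : ℕ) : LipschitzWith 1 (ballPull K m N) := by
  apply LipschitzWith.of_dist_le_mul
  intro f g
  simp only [NNReal.coe_one, one_mul]
  refine (BoundedContinuousFunction.dist_le (dist_nonneg (x := f) (y := g))).2 ?_
  intro z
  exact BoundedContinuousFunction.dist_coe_le_dist (f := f) (g := g) (ballProj K m N z)

lemma ballPull_mem_TateAlg (m N : ℕ) {f : (UnitBall K m) →ᵇ K} (hf : f ∈ TateAlg K m) :
    ballPull K m N f ∈ TateAlg K (m + N) := by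
  have hsub : (ballPull K m N) '' (Algebra.adjoin K (Set.range (coordFn K m)) : Set _)
      ⊆ (Algebra.adjoin K (Set.range (coordFn K (m + N))) : Set _) := by
    rintro g ⟨g', hg', rfl⟩
    have : ballPull K m N g' ∈ (Algebra.adjoin K (Set.range (coordFn K m))).map
        (ballPull K m N) := Subalgebra.mem_map.2 ⟨g', hg', rfl⟩
    rw [AlgHom.map_adjoin] at this
    refine Algebra.adjoin_mono ?_ this
    rintro h ⟨h', ⟨i, rfl⟩, rfl⟩
    exact ⟨Fin.castAdd N i, by ext z; rfl⟩
  have := (image_closure_subset_closure_image (s := (Algebra.adjoin K (Set.range (coordFn K m)) :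
      Set _)) (ballPull_lipschitz K m N).continuous) (Set.mem_image_of_mem _ hf)
  exact closure_mono hsub this

/-- An affinoid variety, realised concretely as the zero locus, inside a closed unit
polydisc, of a set of strictly convergent power series. -/
structure Affinoid where
  m : ℕ
  carrier : Set (UnitBall K m)
  isZeroLocus : ∃ S : Set ((UnitBall K m) →ᵇ K),
    (∀ f ∈ S, f ∈ TateAlg K m) ∧ carrier = {x | ∀ f ∈ S, f x = 0}

variable {K}

/-- Restriction of (bounded continuous) functions on the polydisc to a subset, as plain
functions. -/
def resHom {m : ℕ} (Z : Set (UnitBall K m)) : ((UnitBall K m) →ᵇ K) →ₐ[K] (Z → K) where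
  toFun f := fun z => f z.1
  map_one' := rfl
  map_mul' f g := rfl
  map_zero' := rfl
  map_add' f g := rfl
  commutes' c := rfl

/-- The affinoid algebra of `X`, realised concretely as the algebra of functions on `X`
which are restrictions of strictly convergent power series.  (Since `K` is algebraically
closed, this faithfully represents the reduced affinoid algebra.) -/
def Affinoid.O (X : Affinoid K) : Subalgebra K (X.carrier → K) :=
  (TateAlg K X.m).map (resHom X.carrier)

/-- A basic semianalytic subset of an affinoid variety. -/
def IsBasicSemianalytic (X : Affinoid K) (S : Set X.carrier) : Prop :=
  ∃ (mm n : ℕ) (p q : Fin mm → X.O), n ≤ mm ∧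
    S = {x | (∀ i : Fin mm, (i : ℕ) < n → ‖(p i : X.carrier → K) x‖ ≤ ‖(q i : X.carrier → K) x‖)
      ∧ (∀ i : Fin mm, n ≤ (i : ℕ) → ‖(p i : X.carrier → K) x‖ < ‖(q i : X.carrier → K) x‖)}

/-- A semianalytic subset of an affinoid variety: a finite union of basic sets. -/
def IsSemianalytic (X : Affinoid K) (S : Set X.carrier) : Prop :=
  ∃ (k : ℕ) (B : Fin k → Set X.carrier),
    (∀ j, IsBasicSemianalytic X (B j)) ∧ S = ⋃ j, B j

variable (K)

/-- The product `X × R^N` of an affinoid variety with a closed unit polydisc. -/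
def Affinoid.prod (X : Affinoid K) (N : ℕ) : Affinoid K where
  m := X.m + N
  carrier := {z | ballProj K X.m N z ∈ X.carrier}
  isZeroLocus := by
    obtain ⟨S, hS, hXS⟩ := X.isZeroLocus
    refine ⟨(ballPull K X.m N) '' S, ?_, ?_⟩
    · rintro f ⟨f', hf', rfl⟩
      exact ballPull_mem_TateAlg K X.m N (hS f' hf')
    · ext z
      simp only [Set.mem_setOf_eq, hXS, Set.forall_mem_image]
      rfl

variable {K}

/-- The projection map `X × R^N → X` on points. -/
def Affinoid.projFun (X : Affinoid K) (N : ℕ) (z : (X.prod K N).carrier) : X.carrier :=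
  ⟨ballProj K X.m N z.1, z.2⟩

/-- A subanalytic subset of an affinoid variety: the image of a semianalytic subset of
`X × R^N` under the projection `X × R^N → X`. -/
def IsSubanalytic (X : Affinoid K) (S : Set X.carrier) : Prop :=
  ∃ (N : ℕ) (T : Set (X.prod K N).carrier),
    IsSemianalytic (X.prod K N) T ∧ S = (X.projFun N) '' T

end RigidQE
end

noncomputable section
namespace RigidQE

variable {K : Type} [NormedField K] [CompleteSpace K] [IsAlgClosed K] [IsUltrametricDist K]

/-- A map of affinoid varieties: a map on points which pulls analytic functions back to
analytic functions (equivalently, a map induced by a `K`-algebra morphism of the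
corresponding affinoid algebras). -/
structure AffinoidMap (Y X : Affinoid K) where
  toFun : Y.carrier → X.carrier
  pullback : ∀ p : X.O, (fun y => (p : X.carrier → K) (toFun y)) ∈ Y.O

/-- The `K`-algebra morphism of affinoid algebras corresponding to a map of affinoid
varieties. -/
def AffinoidMap.algHom {Y X : Affinoid K} (f : AffinoidMap Y X) : X.O →ₐ[K] Y.O where
  toFun p := ⟨fun y => (p : X.carrier → K) (f.toFun y), f.pullback p⟩
  map_one' := by ext y; simp
  map_mul' p q := by ext y; simp
  map_zero' := by ext y; simp
  map_add' p q := by ext y; simp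
  commutes' c := by ext y; simp

/-- A map of affinoid varieties is flat if the corresponding morphism of affinoid algebras
is flat. -/
def AffinoidMap.Flat {Y X : Affinoid K} (f : AffinoidMap Y X) : Prop :=
  RingHom.Flat f.algHom.toRingHom

open Classical in
/-- The truncated division function `D` of Denef–van den Dries:
`D (a, b) = a / b` if `‖a‖ ≤ ‖b‖ ≠ 0`, and `D (a, b) = 0` otherwise. -/
def Ddiv (a b : K) : K := if ‖a‖ ≤ ‖b‖ ∧ b ≠ 0 then a / b else 0

/-- The point `(x, t) ∈ X × R^N` determined by `x ∈ X` and `t ∈ R^N`. -/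
def extendPt (X : Affinoid K) (N : ℕ) (x : X.carrier) (t : Fin N → K)
    (ht : ∀ i, ‖t i‖ ≤ 1) : (X.prod K N).carrier := by
  have hmem : Fin.append (fun i => x.1.1 i) t ∈ UnitBall K (X.m + N) := by
    intro j
    refine Fin.addCases (motive := fun j => ‖Fin.append (fun i => x.1.1 i) t j‖ ≤ 1)
      (fun i => ?_) (fun i => ?_) j
    · simp only [Fin.append_left]; exact x.1.2 i
    · simp only [Fin.append_right]; exact ht i
  refine ⟨⟨Fin.append (fun i => x.1.1 i) t, hmem⟩, ?_⟩
  show ballProj K X.m N ⟨Fin.append (fun i => x.1.1 i) t, hmem⟩ ∈ X.carrier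
  have h : ballProj K X.m N ⟨Fin.append (fun i => x.1.1 i) t, hmem⟩ = x.1 := by
    apply Subtype.ext; funext i
    show Fin.append (fun i => x.1.1 i) t (Fin.castAdd N i) = x.1.1 i
    rw [Fin.append_left]
  rw [h]; exact x.2

/-- The algebra `A^D` of `D`-functions on an affinoid variety `X = Sp A`: the smallest
`K`-algebra of `K`-valued functions on `X` containing `A` and closed under truncated
division `D` and under composition with strictly convergent power series over `A`
(the latter being realised as analytic functions on `X × R^N`). -/
inductive IsDFun (X : Affinoid K) : (X.carrier → K) → Prop
  | base (p : X.O) : IsDFun X (p : X.carrier → K)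
  | smul (c : K) {p : X.carrier → K} : IsDFun X p → IsDFun X (c • p)
  | add {p q : X.carrier → K} : IsDFun X p → IsDFun X q → IsDFun X (p + q)
  | mul {p q : X.carrier → K} : IsDFun X p → IsDFun X q → IsDFun X (p * q)
  | div {p q : X.carrier → K} : IsDFun X p → IsDFun X q →
      IsDFun X (fun x => Ddiv (p x) (q x))
  | comp (N : ℕ) (p : (X.prod K N).O) (q : Fin N → (X.carrier → K))
      (hq : ∀ i, IsDFun X (q i)) (hq1 : ∀ i x, ‖q i x‖ ≤ 1) :
      IsDFun X (fun x =>
        (p : (X.prod K N).carrier → K) (extendPt X N x (fun i => q i x) (fun i => hq1 i x)))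

/-- A basic `D`-semianalytic subset of an affinoid variety. -/
def IsBasicDSemianalytic (X : Affinoid K) (S : Set X.carrier) : Prop :=
  ∃ (mm n : ℕ) (p q : Fin mm → (X.carrier → K)), n ≤ mm ∧
    (∀ i, IsDFun X (p i) ∧ IsDFun X (q i)) ∧
    S = {x | (∀ i : Fin mm, (i : ℕ) < n → ‖p i x‖ ≤ ‖q i x‖)
      ∧ (∀ i : Fin mm, n ≤ (i : ℕ) → ‖p i x‖ < ‖q i x‖)}

/-- A `D`-semianalytic subset of an affinoid variety: a finite union of basic
`D`-semianalytic sets. -/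
def IsDSemianalytic (X : Affinoid K) (S : Set X.carrier) : Prop :=
  ∃ (k : ℕ) (B : Fin k → Set X.carrier),
    (∀ j, IsBasicDSemianalytic X (B j)) ∧ S = ⋃ j, B j

end RigidQE
end

/-!
Up to a nonzero constant factor, every `D`-function is a fibre coordinate on a semianalytic set
`T ⊆ X × R^N` that maps onto `X`. For an analytic function, adjoin one coordinate cut out by its
rescaled graph. For the other constructions of `A^D`, first put the arguments on a common `T` (a
fibre product over `X`), then adjoin one coordinate for the result. For sums, products and
substitution into power series, this coordinate is cut out by the graph of an analytic function.
For `D` it is cut out by the semianalytic set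
`(‖u‖ ≤ ‖v‖ ∧ v ≠ 0 ∧ w v = u) ∨ ((‖v‖ < ‖u‖ ∨ v = 0) ∧ w = 0)`, and `D (k u) (k v) = D u v` makes
the constant factors harmless. On such a `T`, a comparison `‖p x‖ ≤ ‖q x‖` of `D`-functions
becomes a comparison of analytic functions. So it cuts out the projection of a semianalytic set,
and fibre products show that these projections are closed under finite intersections and unions.
-/

noncomputable section
namespace RigidQE

open Set

section NormedField

variable {K : Type} [NormedField K]

lemma exists_ne_zero_forall_norm_mul_le_one (b : ℝ) :
    ∃ e : K, e ≠ 0 ∧ ∀ x : K, ‖x‖ ≤ b → ‖e * x‖ ≤ 1 := by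
  by_cases h : ∃ a : K, 1 < ‖a‖
  · obtain ⟨a, ha⟩ := h
    have hb : 0 < max b 1 := lt_max_of_lt_right one_pos
    have ha' : ‖a⁻¹‖ < 1 := by rw [norm_inv]; exact inv_lt_one_of_one_lt₀ ha
    obtain ⟨n, hn⟩ := exists_pow_lt_of_lt_one (inv_pos.2 hb) ha'
    refine ⟨a⁻¹ ^ n, pow_ne_zero _ (inv_ne_zero (norm_pos_iff.1 (one_pos.trans ha))),
      fun x hx => ?_⟩
    calc ‖a⁻¹ ^ n * x‖ ≤ (max b 1)⁻¹ * max b 1 := by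
          rw [norm_mul, norm_pow]
          exact mul_le_mul hn.le (hx.trans (le_max_left _ _)) (norm_nonneg _) (by positivity)
      _ = 1 := inv_mul_cancel₀ hb.ne'
  · push Not at h
    exact ⟨1, one_ne_zero, fun x _ => by simpa using h x⟩

lemma norm_mul_le_norm_mul_iff {k : K} (hk : k ≠ 0) {a b : K} :
    ‖k * a‖ ≤ ‖k * b‖ ↔ ‖a‖ ≤ ‖b‖ := by
  rw [norm_mul, norm_mul]
  exact mul_le_mul_iff_right₀ (norm_pos_iff.2 hk)

lemma norm_mul_lt_norm_mul_iff {k : K} (hk : k ≠ 0) {a b : K} :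
    ‖k * a‖ < ‖k * b‖ ↔ ‖a‖ < ‖b‖ := by
  rw [norm_mul, norm_mul]
  exact mul_lt_mul_iff_right₀ (norm_pos_iff.2 hk)

lemma norm_ddiv_le_one (a b : K) : ‖Ddiv a b‖ ≤ 1 := by
  unfold Ddiv
  split_ifs with h
  · rw [norm_div]
    exact div_le_one_of_le₀ h.1 (norm_nonneg _)
  · simp

lemma ddiv_mul_mul {k : K} (hk : k ≠ 0) (a b : K) : Ddiv (k * a) (k * b) = Ddiv a b := by
  have hcond : (‖k * a‖ ≤ ‖k * b‖ ∧ k * b ≠ 0) ↔ (‖a‖ ≤ ‖b‖ ∧ b ≠ 0) := by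
    rw [norm_mul_le_norm_mul_iff hk, mul_ne_zero_iff_left hk]
  unfold Ddiv
  by_cases h : ‖a‖ ≤ ‖b‖ ∧ b ≠ 0
  · rw [if_pos (hcond.2 h), if_pos h, mul_div_mul_left _ _ hk]
  · rw [if_neg (mt hcond.1 h), if_neg h]

lemma eq_ddiv_iff (w a b : K) :
    w = Ddiv a b ↔ (‖a‖ ≤ ‖b‖ ∧ b ≠ 0 ∧ w * b = a) ∨ ((‖b‖ < ‖a‖ ∨ b = 0) ∧ w = 0) := by
  unfold Ddiv
  by_cases h : ‖a‖ ≤ ‖b‖ ∧ b ≠ 0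
  · have : ¬ (‖b‖ < ‖a‖ ∨ b = 0) := by
      rintro (h' | h')
      exacts [h'.not_ge h.1, h.2 h']
    rw [if_pos h, eq_div_iff h.2]
    tauto
  · have : ‖b‖ < ‖a‖ ∨ b = 0 := by
      by_contra! h'
      exact h ⟨h'.1, h'.2⟩
    rw [if_neg h]
    tauto

def ballMap {M M' : ℕ} (ρ : Fin M' → Fin M) : C(UnitBall K M, UnitBall K M') :=
  ⟨fun z => ⟨fun i => z.1 (ρ i), fun i => z.2 (ρ i)⟩, by
    apply Continuous.subtype_mk
    exact continuous_pi fun i => (continuous_apply _).comp continuous_subtype_val⟩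

def ballMapAlgHom {M M' : ℕ} (ρ : Fin M' → Fin M) :
    (UnitBall K M' →ᵇ K) →ₐ[K] (UnitBall K M →ᵇ K) where
  toFun f := f.compContinuous (ballMap ρ)
  map_one' := rfl
  map_mul' _ _ := rfl
  map_zero' := rfl
  map_add' _ _ := rfl
  commutes' _ := rfl

lemma ballMapAlgHom_mem_TateAlg {M M' : ℕ} (ρ : Fin M' → Fin M) {f : UnitBall K M' →ᵇ K}
    (hf : f ∈ TateAlg K M') : ballMapAlgHom ρ f ∈ TateAlg K M := by
  have hcont : Continuous (ballMapAlgHom (K := K) ρ) :=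
    (BoundedContinuousFunction.compContinuousCLM K K (ballMap ρ)).continuous
  refine Subalgebra.topologicalClosure_minimal (t := (TateAlg K M).comap (ballMapAlgHom ρ))
    (Algebra.adjoin_le ?_) ((Subalgebra.isClosed_topologicalClosure _).preimage hcont) hf
  rintro _ ⟨i, rfl⟩
  exact Subalgebra.le_topologicalClosure _ (Algebra.subset_adjoin ⟨ρ i, by ext; rfl⟩)

lemma exists_forall_norm_le {Y : Affinoid K} {p : Y.carrier → K} (hp : p ∈ Y.O) :
    ∃ b : ℝ, ∀ y, ‖p y‖ ≤ b := by
  obtain ⟨f, -, rfl⟩ := Subalgebra.mem_map.1 hp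
  exact ⟨‖f‖, fun y => f.norm_coe_le_norm y.1⟩

section Semianalytic

variable {Y : Affinoid K}

-- The same sets as `IsSemianalytic`, presented so that closure under `∩` and `∪` is built in.
variable (Y) in
inductive Semianalytic : Set Y.carrier → Prop
  | le {p q : Y.carrier → K} : p ∈ Y.O → q ∈ Y.O → Semianalytic {y | ‖p y‖ ≤ ‖q y‖}
  | lt {p q : Y.carrier → K} : p ∈ Y.O → q ∈ Y.O → Semianalytic {y | ‖p y‖ < ‖q y‖}
  | inter {s t : Set Y.carrier} : Semianalytic s → Semianalytic t → Semianalytic (s ∩ t)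
  | union {s t : Set Y.carrier} : Semianalytic s → Semianalytic t → Semianalytic (s ∪ t)

namespace Semianalytic

lemma univ : Semianalytic Y univ := by
  simpa using le (zero_mem Y.O) (zero_mem Y.O)

lemma empty : Semianalytic Y ∅ := by
  simpa using lt (zero_mem Y.O) (zero_mem Y.O)

lemma setOf_eq {p q : Y.carrier → K} (hp : p ∈ Y.O) (hq : q ∈ Y.O) :
    Semianalytic Y {y | p y = q y} := by
  simpa [sub_eq_zero] using le (sub_mem hp hq) (zero_mem Y.O)

lemma setOf_eq_ddiv {a b w : Y.carrier → K} (ha : a ∈ Y.O) (hb : b ∈ Y.O) (hw : w ∈ Y.O) :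
    Semianalytic Y {y | w y = Ddiv (a y) (b y)} := by
  have h := (((le ha hb).inter (lt (zero_mem _) hb)).inter
      (le (sub_mem (mul_mem hw hb) ha) (zero_mem _))).union
    (((lt hb ha).union (le hb (zero_mem _))).inter (le hw (zero_mem _)))
  convert h using 1
  ext y
  simp [eq_ddiv_iff, sub_eq_zero, and_assoc]

end Semianalytic

def IsBasicLeLt (S : Set Y.carrier) : Prop :=
  ∃ (a b : ℕ) (P Q : Fin a → Y.O) (P' Q' : Fin b → Y.O),
    S = {y | (∀ i, ‖(P i : Y.carrier → K) y‖ ≤ ‖(Q i : Y.carrier → K) y‖)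
      ∧ ∀ i, ‖(P' i : Y.carrier → K) y‖ < ‖(Q' i : Y.carrier → K) y‖}

namespace IsBasicLeLt

lemma isBasicSemianalytic {S : Set Y.carrier} (h : IsBasicLeLt S) : IsBasicSemianalytic Y S := by
  obtain ⟨a, b, P, Q, P', Q', rfl⟩ := h
  refine ⟨a + b, a, Fin.append P P', Fin.append Q Q', Nat.le_add_right a b, ?_⟩
  ext y
  simp [Fin.forall_fin_add]

lemma inter {S T : Set Y.carrier} (hS : IsBasicLeLt S) (hT : IsBasicLeLt T) :
    IsBasicLeLt (S ∩ T) := by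
  obtain ⟨a, b, P, Q, P', Q', rfl⟩ := hS
  obtain ⟨c, d, R, U, R', U', rfl⟩ := hT
  refine ⟨a + c, b + d, Fin.append P R, Fin.append Q U, Fin.append P' R', Fin.append Q' U', ?_⟩
  ext y
  simp only [mem_inter_iff, mem_ofPred_eq, Fin.forall_fin_add, Fin.append_left, Fin.append_right]
  tauto

lemma setOf_le (p q : Y.O) :
    IsBasicLeLt {y | ‖(p : Y.carrier → K) y‖ ≤ ‖(q : Y.carrier → K) y‖} :=
  ⟨1, 0, fun _ => p, fun _ => q, finZeroElim, finZeroElim, by ext; simp⟩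

lemma setOf_lt (p q : Y.O) :
    IsBasicLeLt {y | ‖(p : Y.carrier → K) y‖ < ‖(q : Y.carrier → K) y‖} :=
  ⟨0, 1, finZeroElim, finZeroElim, fun _ => p, fun _ => q, by ext; simp⟩

end IsBasicLeLt

lemma Semianalytic.exists_iUnion_isBasicLeLt {S : Set Y.carrier} (h : Semianalytic Y S) :
    ∃ (ι : Type) (_ : Fintype ι) (B : ι → Set Y.carrier),
      (∀ i, IsBasicLeLt (B i)) ∧ S = ⋃ i, B i := by
  induction h with
  | le hp hq =>
    exact ⟨Unit, inferInstance, fun _ => _, fun _ => .setOf_le ⟨_, hp⟩ ⟨_, hq⟩,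
      (iUnion_const _).symm⟩
  | lt hp hq =>
    exact ⟨Unit, inferInstance, fun _ => _, fun _ => .setOf_lt ⟨_, hp⟩ ⟨_, hq⟩,
      (iUnion_const _).symm⟩
  | inter _ _ ih₁ ih₂ =>
    obtain ⟨ι, _, B, hB, rfl⟩ := ih₁
    obtain ⟨κ, _, C, hC, rfl⟩ := ih₂
    exact ⟨ι × κ, inferInstance, fun i => B i.1 ∩ C i.2, fun i => (hB i.1).inter (hC i.2),
      by rw [iUnion_inter_iUnion, iUnion_prod']⟩
  | union _ _ ih₁ ih₂ =>
    obtain ⟨ι, _, B, hB, rfl⟩ := ih₁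
    obtain ⟨κ, _, C, hC, rfl⟩ := ih₂
    exact ⟨ι ⊕ κ, inferInstance, Sum.elim B C, Sum.forall.2 ⟨hB, hC⟩, by rw [iUnion_sum]; rfl⟩

lemma Semianalytic.isSemianalytic {S : Set Y.carrier} (h : Semianalytic Y S) :
    IsSemianalytic Y S := by
  obtain ⟨ι, _, B, hB, rfl⟩ := h.exists_iUnion_isBasicLeLt
  exact ⟨Fintype.card ι, B ∘ (Fintype.equivFin ι).symm, fun j => (hB _).isBasicSemianalytic,
    ((Fintype.equivFin ι).symm.surjective.iUnion_comp B).symm⟩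

end Semianalytic

end NormedField

variable {K : Type} [NormedField K] [CompleteSpace K] [IsAlgClosed K] [IsUltrametricDist K]
  {X : Affinoid K} {N N' N₁ N₂ : ℕ}

def fiberCoord (j : Fin N) (z : (X.prod K N).carrier) : K := z.1.1 (Fin.natAdd X.m j)

lemma norm_fiberCoord_le_one (j : Fin N) (z : (X.prod K N).carrier) : ‖fiberCoord j z‖ ≤ 1 :=
  z.1.2 _

@[simp]
lemma projFun_extendPt (x : X.carrier) (t : Fin N → K) (ht : ∀ i, ‖t i‖ ≤ 1) :
    X.projFun N (extendPt X N x t ht) = x :=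
  Subtype.ext <| Subtype.ext <| funext fun i => Fin.append_left _ _ i

@[simp]
lemma fiberCoord_extendPt (x : X.carrier) (t : Fin N → K) (ht : ∀ i, ‖t i‖ ≤ 1) (j : Fin N) :
    fiberCoord j (extendPt X N x t ht) = t j :=
  Fin.append_right _ _ j

lemma prod_ext {z z' : (X.prod K N).carrier} (hx : X.projFun N z = X.projFun N z')
    (ht : ∀ j, fiberCoord j z = fiberCoord j z') : z = z' := by
  refine Subtype.ext <| Subtype.ext <| funext fun k =>
    Fin.addCases (motive := fun k => z.1.1 k = z'.1.1 k) (fun i => ?_) ht k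
  exact congrArg (fun x : X.carrier => x.1.1 i) hx

lemma projFun_surjective (N : ℕ) : Function.Surjective (X.projFun N) :=
  fun x => ⟨extendPt X N x 0 (fun _ => by simp), projFun_extendPt _ _ _⟩

def fiberMap (σ : Fin N' → Fin N) (z : (X.prod K N).carrier) : (X.prod K N').carrier :=
  extendPt X N' (X.projFun N z) (fun j => fiberCoord (σ j) z) fun _ => norm_fiberCoord_le_one _ z

@[simp]
lemma projFun_fiberMap (σ : Fin N' → Fin N) (z : (X.prod K N).carrier) :
    X.projFun N' (fiberMap σ z) = X.projFun N z :=
  projFun_extendPt _ _ _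

@[simp]
lemma fiberCoord_fiberMap (σ : Fin N' → Fin N) (z : (X.prod K N).carrier) (j : Fin N') :
    fiberCoord j (fiberMap σ z) = fiberCoord (σ j) z :=
  fiberCoord_extendPt _ _ _ _

def pairPt (z₁ : (X.prod K N₁).carrier) (z₂ : (X.prod K N₂).carrier) :
    (X.prod K (N₁ + N₂)).carrier :=
  extendPt X (N₁ + N₂) (X.projFun N₁ z₁)
    (Fin.append (fun j => fiberCoord j z₁) (fun j => fiberCoord j z₂))
    ((Fin.forall_fin_add _).2
      ⟨fun j => by simpa using norm_fiberCoord_le_one j z₁,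
        fun j => by simpa using norm_fiberCoord_le_one j z₂⟩)

@[simp]
lemma projFun_pairPt (z₁ : (X.prod K N₁).carrier) (z₂ : (X.prod K N₂).carrier) :
    X.projFun (N₁ + N₂) (pairPt z₁ z₂) = X.projFun N₁ z₁ :=
  projFun_extendPt _ _ _

@[simp]
lemma fiberCoord_castAdd_pairPt (z₁ : (X.prod K N₁).carrier) (z₂ : (X.prod K N₂).carrier)
    (j : Fin N₁) : fiberCoord (Fin.castAdd N₂ j) (pairPt z₁ z₂) = fiberCoord j z₁ := by
  simp [pairPt]

@[simp]
lemma fiberCoord_natAdd_pairPt (z₁ : (X.prod K N₁).carrier) (z₂ : (X.prod K N₂).carrier)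
    (j : Fin N₂) : fiberCoord (Fin.natAdd N₁ j) (pairPt z₁ z₂) = fiberCoord j z₂ := by
  simp [pairPt]

lemma fiberMap_castAdd_pairPt (z₁ : (X.prod K N₁).carrier) (z₂ : (X.prod K N₂).carrier) :
    fiberMap (Fin.castAdd N₂) (pairPt z₁ z₂) = z₁ :=
  prod_ext (by simp) (by simp)

lemma fiberMap_natAdd_pairPt {z₁ : (X.prod K N₁).carrier} {z₂ : (X.prod K N₂).carrier}
    (h : X.projFun N₁ z₁ = X.projFun N₂ z₂) : fiberMap (Fin.natAdd N₁) (pairPt z₁ z₂) = z₂ :=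
  prod_ext (by simp [h]) (by simp)

lemma image_fiberProd (T₁ : Set (X.prod K N₁).carrier) (T₂ : Set (X.prod K N₂).carrier) :
    X.projFun (N₁ + N₂) '' (fiberMap (Fin.castAdd N₂) ⁻¹' T₁ ∩ fiberMap (Fin.natAdd N₁) ⁻¹' T₂)
      = X.projFun N₁ '' T₁ ∩ X.projFun N₂ '' T₂ := by
  ext x
  constructor
  · rintro ⟨z, ⟨h₁, h₂⟩, rfl⟩
    exact ⟨⟨_, h₁, projFun_fiberMap _ z⟩, ⟨_, h₂, projFun_fiberMap _ z⟩⟩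
  · rintro ⟨⟨z₁, h₁, rfl⟩, ⟨z₂, h₂, hx⟩⟩
    refine ⟨pairPt z₁ z₂, ⟨?_, ?_⟩, projFun_pairPt z₁ z₂⟩
    · rwa [mem_preimage, fiberMap_castAdd_pairPt]
    · rwa [mem_preimage, fiberMap_natAdd_pairPt hx.symm]

lemma fiberCoord_mem_O (j : Fin N) : fiberCoord j ∈ (X.prod K N).O :=
  Subalgebra.mem_map.2 ⟨coordFn K _ (Fin.natAdd X.m j),
    Subalgebra.le_topologicalClosure _ (Algebra.subset_adjoin ⟨_, rfl⟩), rfl⟩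

lemma comp_projFun_mem_O {p : X.carrier → K} (hp : p ∈ X.O) :
    (fun z => p (X.projFun N z)) ∈ (X.prod K N).O := by
  obtain ⟨f, hf, rfl⟩ := Subalgebra.mem_map.1 hp
  exact Subalgebra.mem_map.2 ⟨ballPull K X.m N f, ballPull_mem_TateAlg K X.m N hf, rfl⟩

lemma comp_fiberMap_mem_O (σ : Fin N' → Fin N) {p : (X.prod K N').carrier → K}
    (hp : p ∈ (X.prod K N').O) : (fun z => p (fiberMap σ z)) ∈ (X.prod K N).O := by
  obtain ⟨f, hf, rfl⟩ := Subalgebra.mem_map.1 hp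
  refine Subalgebra.mem_map.2 ⟨ballMapAlgHom (Fin.addCases (Fin.castAdd N) (Fin.natAdd X.m ∘ σ)) f,
    ballMapAlgHom_mem_TateAlg _ hf, funext fun z => congrArg f (Subtype.ext <| funext fun k => ?_)⟩
  refine Fin.addCases (fun i => ?_) (fun j => ?_) k
  · show z.1.1 (Fin.addCases _ _ (Fin.castAdd N' i)) = (X.projFun N' (fiberMap σ z)).1.1 i
    erw [Fin.addCases_left, projFun_fiberMap]
    rfl
  · show z.1.1 (Fin.addCases _ _ (Fin.natAdd X.m j)) = fiberCoord j (fiberMap σ z)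
    erw [Fin.addCases_right, fiberCoord_fiberMap]
    rfl

lemma Semianalytic.preimage_fiberMap (σ : Fin N' → Fin N) {T : Set (X.prod K N').carrier}
    (hT : Semianalytic _ T) : Semianalytic _ (fiberMap σ ⁻¹' T) := by
  induction hT with
  | le hp hq => exact le (comp_fiberMap_mem_O σ hp) (comp_fiberMap_mem_O σ hq)
  | lt hp hq => exact lt (comp_fiberMap_mem_O σ hp) (comp_fiberMap_mem_O σ hq)
  | inter _ _ ih₁ ih₂ => exact ih₁.inter ih₂
  | union _ _ ih₁ ih₂ => exact ih₁.union ih₂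

variable (X) in
def Subanalytic (S : Set X.carrier) : Prop :=
  ∃ (N : ℕ) (T : Set (X.prod K N).carrier), Semianalytic _ T ∧ X.projFun N '' T = S

namespace Subanalytic

lemma isSubanalytic {S : Set X.carrier} (h : Subanalytic X S) : IsSubanalytic X S := by
  obtain ⟨N, T, hT, rfl⟩ := h
  exact ⟨N, T, hT.isSemianalytic, rfl⟩

lemma univ : Subanalytic X univ :=
  ⟨0, Set.univ, .univ, image_univ_of_surjective (projFun_surjective 0)⟩

lemma empty : Subanalytic X ∅ :=
  ⟨0, ∅, .empty, image_empty _⟩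

lemma inter {S S' : Set X.carrier} (hS : Subanalytic X S) (hS' : Subanalytic X S') :
    Subanalytic X (S ∩ S') := by
  obtain ⟨N, T, hT, rfl⟩ := hS
  obtain ⟨N', T', hT', rfl⟩ := hS'
  exact ⟨N + N', _, (hT.preimage_fiberMap _).inter (hT'.preimage_fiberMap _), image_fiberProd T T'⟩

lemma union {S S' : Set X.carrier} (hS : Subanalytic X S) (hS' : Subanalytic X S') :
    Subanalytic X (S ∪ S') := by
  obtain ⟨N, T, hT, rfl⟩ := hS
  obtain ⟨N', T', hT', rfl⟩ := hS'
  have h₁ : X.projFun (N + N') '' (fiberMap (Fin.castAdd N') ⁻¹' T) = X.projFun N '' T := by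
    simpa [image_univ_of_surjective (projFun_surjective N')] using
      image_fiberProd T (Set.univ : Set (X.prod K N').carrier)
  have h₂ : X.projFun (N + N') '' (fiberMap (Fin.natAdd N) ⁻¹' T') = X.projFun N' '' T' := by
    simpa [image_univ_of_surjective (projFun_surjective N)] using
      image_fiberProd (Set.univ : Set (X.prod K N).carrier) T'
  exact ⟨N + N', _, (hT.preimage_fiberMap _).union (hT'.preimage_fiberMap _),
    by rw [image_union, h₁, h₂]⟩

lemma iInter {ι : Type*} [Fintype ι] {S : ι → Set X.carrier} (h : ∀ i, Subanalytic X (S i)) :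
    Subanalytic X (⋂ i, S i) := by
  have := Finset.inf_induction (s := Finset.univ) univ (fun _ h₁ _ h₂ => h₁.inter h₂)
    fun i _ => h i
  rwa [Finset.inf_univ_eq_iInf] at this

lemma iUnion {ι : Type*} [Fintype ι] {S : ι → Set X.carrier} (h : ∀ i, Subanalytic X (S i)) :
    Subanalytic X (⋃ i, S i) := by
  have := Finset.sup_induction (s := Finset.univ) empty (fun _ h₁ _ h₂ => h₁.union h₂)
    fun i _ => h i
  rwa [Finset.sup_univ_eq_iSup] at this

lemma of_forall_mem_iff {M : ℕ} {T C : Set (X.prod K M).carrier} (hT : Semianalytic _ T)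
    (hTX : X.projFun M '' T = Set.univ) (hC : Semianalytic _ C) {S : Set X.carrier}
    (h : ∀ z ∈ T, z ∈ C ↔ X.projFun M z ∈ S) : Subanalytic X S := by
  refine ⟨M, T ∩ C, hT.inter hC, Subset.antisymm ?_ fun x hx => ?_⟩
  · rintro _ ⟨z, ⟨hz, hzC⟩, rfl⟩
    exact (h z hz).1 hzC
  · obtain ⟨z, hz, rfl⟩ : x ∈ X.projFun M '' T := hTX ▸ Set.mem_univ x
    exact ⟨z, ⟨hz, (h z hz).2 hx⟩, rfl⟩

end Subanalytic

-- Equivalently: `f` takes values in `R` and its graph is a subanalytic subset of `X × R`.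
variable (X) in
def IsFiberCoord (f : X.carrier → K) : Prop :=
  ∃ (N : ℕ) (T : Set (X.prod K N).carrier) (j : Fin N), Semianalytic _ T ∧
    X.projFun N '' T = univ ∧ ∀ z ∈ T, fiberCoord j z = f (X.projFun N z)

-- `D`-functions need not take values in `R`, so they are fibre coordinates only after scaling.
variable (X) in
def IsScaledFiberCoord (f : X.carrier → K) : Prop :=
  ∃ c : K, c ≠ 0 ∧ IsFiberCoord X fun x => c * f x

namespace IsFiberCoord

lemma isScaledFiberCoord {f : X.carrier → K} (hf : IsFiberCoord X f) : IsScaledFiberCoord X f :=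
  ⟨1, one_ne_zero, by simpa using hf⟩

-- The new coordinate of `X × R^(M+1)` is cut out by the graph of `g`.
lemma of_graph {M : ℕ} {T : Set (X.prod K M).carrier} (hT : Semianalytic _ T)
    (hTX : X.projFun M '' T = univ) {g : (X.prod K M).carrier → K} (hg : ∀ z ∈ T, ‖g z‖ ≤ 1)
    (hΓ : Semianalytic (X.prod K (M + 1))
      {z | fiberCoord (Fin.natAdd M 0) z = g (fiberMap (Fin.castAdd 1) z)})
    {f : X.carrier → K} (hgf : ∀ z ∈ T, g z = f (X.projFun M z)) : IsFiberCoord X f := by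
  refine ⟨M + 1, fiberMap (Fin.castAdd 1) ⁻¹' T ∩ _, Fin.natAdd M 0,
    (hT.preimage_fiberMap _).inter hΓ, eq_univ_of_forall fun x => ?_, ?_⟩
  · obtain ⟨z, hz, rfl⟩ : x ∈ X.projFun M '' T := hTX ▸ mem_univ x
    let w : (X.prod K 1).carrier := extendPt X 1 (X.projFun M z) (fun _ => g z) fun _ => hg z hz
    refine ⟨pairPt z w, ⟨?_, ?_⟩, projFun_pairPt z w⟩
    · rwa [mem_preimage, fiberMap_castAdd_pairPt]
    · simp [fiberMap_castAdd_pairPt, w]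
  · rintro z ⟨hz, hzΓ⟩
    rw [hzΓ, hgf _ hz, projFun_fiberMap]

lemma joint {n : ℕ} {f : Fin n → X.carrier → K} (h : ∀ i, IsFiberCoord X (f i)) :
    ∃ (M : ℕ) (T : Set (X.prod K M).carrier) (j : Fin n → Fin M), Semianalytic _ T ∧
      X.projFun M '' T = univ ∧ ∀ z ∈ T, ∀ i, fiberCoord (j i) z = f i (X.projFun M z) := by
  induction n with
  | zero =>
    exact ⟨0, univ, finZeroElim, .univ, image_univ_of_surjective (projFun_surjective 0),
      fun _ _ i => i.elim0⟩
  | succ n ih =>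
    obtain ⟨M, T₁, j₁, hT₁, hT₁X, hj₁⟩ := ih fun i => h i.castSucc
    obtain ⟨N, T₂, j₂, hT₂, hT₂X, hj₂⟩ := h (Fin.last n)
    refine ⟨M + N, fiberMap (Fin.castAdd N) ⁻¹' T₁ ∩ fiberMap (Fin.natAdd M) ⁻¹' T₂,
      Fin.lastCases (Fin.natAdd M j₂) fun i => Fin.castAdd N (j₁ i),
      (hT₁.preimage_fiberMap _).inter (hT₂.preimage_fiberMap _),
      by rw [image_fiberProd, hT₁X, hT₂X, inter_self], ?_⟩
    rintro z ⟨hz₁, hz₂⟩ i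
    induction i using Fin.lastCases with
    | last => simpa using hj₂ _ hz₂
    | cast i => simpa using hj₁ _ hz₁ i

end IsFiberCoord

namespace IsScaledFiberCoord

lemma of_analytic {M : ℕ} {T : Set (X.prod K M).carrier} (hT : Semianalytic _ T)
    (hTX : X.projFun M '' T = univ) {G : (X.prod K M).carrier → K} (hG : G ∈ (X.prod K M).O)
    {c : K} (hc : c ≠ 0) {f : X.carrier → K} (hGf : ∀ z ∈ T, G z = c * f (X.projFun M z)) :
    IsScaledFiberCoord X f := by
  obtain ⟨b, hb⟩ := exists_forall_norm_le hG
  obtain ⟨e, he, heb⟩ := exists_ne_zero_forall_norm_mul_le_one (K := K) b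
  refine ⟨e * c, mul_ne_zero he hc, IsFiberCoord.of_graph hT hTX (g := e • G)
    (fun z _ => heb _ (hb z)) ?_ fun z hz => ?_⟩
  · exact .setOf_eq (fiberCoord_mem_O _) (comp_fiberMap_mem_O _ (Subalgebra.smul_mem _ hG e))
  · simp [hGf z hz, mul_assoc]

lemma isFiberCoord {f : X.carrier → K} (hf : IsScaledFiberCoord X f) (hf₁ : ∀ x, ‖f x‖ ≤ 1) :
    IsFiberCoord X f := by
  obtain ⟨c, hc, N, T, j, hT, hTX, hj⟩ := hf
  have hg : ∀ z ∈ T, (c⁻¹ • fiberCoord j) z = f (X.projFun N z) := fun z hz => by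
    simp [hj z hz, hc]
  refine IsFiberCoord.of_graph hT hTX (fun z hz => hg z hz ▸ hf₁ _) ?_ hg
  exact .setOf_eq (fiberCoord_mem_O _)
    (comp_fiberMap_mem_O _ (Subalgebra.smul_mem _ (fiberCoord_mem_O j) _))

lemma common_scale {p q : X.carrier → K} (hp : IsScaledFiberCoord X p)
    (hq : IsScaledFiberCoord X q) :
    ∃ (M : ℕ) (T : Set (X.prod K M).carrier) (k : K) (A B : (X.prod K M).carrier → K),
      k ≠ 0 ∧ A ∈ (X.prod K M).O ∧ B ∈ (X.prod K M).O ∧ Semianalytic _ T ∧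
      X.projFun M '' T = univ ∧
      ∀ z ∈ T, A z = k * p (X.projFun M z) ∧ B z = k * q (X.projFun M z) := by
  obtain ⟨c, hc, hcp⟩ := hp
  obtain ⟨d, hd, hdq⟩ := hq
  obtain ⟨M, T, j, hT, hTX, hj⟩ := IsFiberCoord.joint
    (f := ![fun x => c * p x, fun x => d * q x]) (Fin.forall_fin_two.2 ⟨hcp, hdq⟩)
  refine ⟨M, T, c * d, d • fiberCoord (j 0), c • fiberCoord (j 1), mul_ne_zero hc hd,
    Subalgebra.smul_mem _ (fiberCoord_mem_O _) _, Subalgebra.smul_mem _ (fiberCoord_mem_O _) _,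
    hT, hTX, fun z hz => ⟨?_, ?_⟩⟩
  · simp [hj z hz 0]
    ring
  · simp [hj z hz 1]
    ring

lemma of_mem_O {p : X.carrier → K} (hp : p ∈ X.O) : IsScaledFiberCoord X p :=
  of_analytic (M := 0) .univ (image_univ_of_surjective (projFun_surjective 0))
    (comp_projFun_mem_O hp) one_ne_zero fun _ _ => (one_mul _).symm

lemma add {p q : X.carrier → K} (hp : IsScaledFiberCoord X p) (hq : IsScaledFiberCoord X q) :
    IsScaledFiberCoord X (p + q) := by
  obtain ⟨M, T, k, A, B, hk, hA, hB, hT, hTX, hAB⟩ := hp.common_scale hq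
  refine of_analytic hT hTX (add_mem hA hB) hk fun z hz => ?_
  simp [(hAB z hz).1, (hAB z hz).2, mul_add]

lemma mul {p q : X.carrier → K} (hp : IsScaledFiberCoord X p) (hq : IsScaledFiberCoord X q) :
    IsScaledFiberCoord X (p * q) := by
  obtain ⟨M, T, k, A, B, hk, hA, hB, hT, hTX, hAB⟩ := hp.common_scale hq
  refine of_analytic hT hTX (mul_mem hA hB) (mul_ne_zero hk hk) fun z hz => ?_
  simp only [Pi.mul_apply, (hAB z hz).1, (hAB z hz).2]
  ring

lemma smul (c : K) {p : X.carrier → K} (hp : IsScaledFiberCoord X p) :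
    IsScaledFiberCoord X (c • p) := by
  rw [Algebra.smul_def]
  exact (of_mem_O (X.O.algebraMap_mem c)).mul hp

lemma ddiv {p q : X.carrier → K} (hp : IsScaledFiberCoord X p) (hq : IsScaledFiberCoord X q) :
    IsScaledFiberCoord X fun x => Ddiv (p x) (q x) := by
  obtain ⟨M, T, k, A, B, hk, hA, hB, hT, hTX, hAB⟩ := hp.common_scale hq
  refine (IsFiberCoord.of_graph hT hTX (g := fun z => Ddiv (A z) (B z))
    (fun _ _ => norm_ddiv_le_one _ _) ?_ fun z hz => ?_).isScaledFiberCoord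
  · exact .setOf_eq_ddiv (comp_fiberMap_mem_O _ hA) (comp_fiberMap_mem_O _ hB)
      (fiberCoord_mem_O _)
  · rw [(hAB z hz).1, (hAB z hz).2, ddiv_mul_mul hk]

lemma comp {N : ℕ} {p : (X.prod K N).carrier → K} (hp : p ∈ (X.prod K N).O)
    {q : Fin N → X.carrier → K} (hq : ∀ i, IsScaledFiberCoord X (q i))
    (hq₁ : ∀ i x, ‖q i x‖ ≤ 1) :
    IsScaledFiberCoord X fun x => p (extendPt X N x (fun i => q i x) fun i => hq₁ i x) := by
  obtain ⟨M, T, v, hT, hTX, hv⟩ := IsFiberCoord.joint fun i => (hq i).isFiberCoord (hq₁ i)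
  refine of_analytic hT hTX (comp_fiberMap_mem_O v hp) one_ne_zero fun z hz => ?_
  rw [one_mul]
  exact congrArg p (prod_ext (by simp) fun i => by simp [hv z hz i])

end IsScaledFiberCoord

lemma IsDFun.isScaledFiberCoord {f : X.carrier → K} (hf : IsDFun X f) :
    IsScaledFiberCoord X f := by
  induction hf with
  | base p => exact .of_mem_O p.2
  | smul c _ ih => exact ih.smul c
  | add _ _ ihp ihq => exact ihp.add ihq
  | mul _ _ ihp ihq => exact ihp.mul ihq
  | div _ _ ihp ihq => exact ihp.ddiv ihq
  | comp N p q _ hq₁ ihq => exact .comp p.2 ihq hq₁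

lemma subanalytic_setOf_norm_le {p q : X.carrier → K} (hp : IsScaledFiberCoord X p)
    (hq : IsScaledFiberCoord X q) : Subanalytic X {x | ‖p x‖ ≤ ‖q x‖} := by
  obtain ⟨M, T, k, A, B, hk, hA, hB, hT, hTX, hAB⟩ := hp.common_scale hq
  refine .of_forall_mem_iff hT hTX (.le hA hB) fun z hz => ?_
  simp only [mem_ofPred_eq, (hAB z hz).1, (hAB z hz).2, norm_mul_le_norm_mul_iff hk]

lemma subanalytic_setOf_norm_lt {p q : X.carrier → K} (hp : IsScaledFiberCoord X p)
    (hq : IsScaledFiberCoord X q) : Subanalytic X {x | ‖p x‖ < ‖q x‖} := by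
  obtain ⟨M, T, k, A, B, hk, hA, hB, hT, hTX, hAB⟩ := hp.common_scale hq
  refine .of_forall_mem_iff hT hTX (.lt hA hB) fun z hz => ?_
  simp only [mem_ofPred_eq, (hAB z hz).1, (hAB z hz).2, norm_mul_lt_norm_mul_iff hk]

lemma IsBasicDSemianalytic.subanalytic {S : Set X.carrier} (hS : IsBasicDSemianalytic X S) :
    Subanalytic X S := by
  obtain ⟨mm, n, p, q, -, hpq, rfl⟩ := hS
  have hset : {x | (∀ i : Fin mm, (i : ℕ) < n → ‖p i x‖ ≤ ‖q i x‖) ∧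
      ∀ i : Fin mm, n ≤ (i : ℕ) → ‖p i x‖ < ‖q i x‖} =
      ⋂ i : Fin mm,
        {x | ((i : ℕ) < n → ‖p i x‖ ≤ ‖q i x‖) ∧ (n ≤ (i : ℕ) → ‖p i x‖ < ‖q i x‖)} := by
    ext x
    simp [forall_and]
  rw [hset]
  refine Subanalytic.iInter fun i => ?_
  have hp := (hpq i).1.isScaledFiberCoord
  have hq := (hpq i).2.isScaledFiberCoord
  by_cases hi : (i : ℕ) < n
  · simpa [hi, not_le.2 hi] using subanalytic_setOf_norm_le hp hq
  · simpa [hi, not_lt.1 hi] using subanalytic_setOf_norm_lt hp hq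

lemma IsDSemianalytic.subanalytic {S : Set X.carrier} (hS : IsDSemianalytic X S) :
    Subanalytic X S := by
  obtain ⟨k, B, hB, rfl⟩ := hS
  exact .iUnion fun j => (hB j).subanalytic

end RigidQE
end

noncomputable section
namespace RigidQE

theorem dSemianalytic_isSubanalytic_general
    (K : Type) [NormedField K] [CompleteSpace K] [IsAlgClosed K] [IsUltrametricDist K]
    (X : Affinoid K) (S : Set X.carrier) (hS : IsDSemianalytic X S) :
    IsSubanalytic X S :=
  hS.subanalytic.isSubanalytic

/-- Every `D`-semianalytic subset of a reduced affinoid variety `X` is subanalytic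
in `X`. -/
theorem dSemianalytic_isSubanalytic
    (K : Type) [NormedField K] [CompleteSpace K] [IsAlgClosed K] [IsUltrametricDist K]
    (X : Affinoid K) (hred : IsReduced X.O) (S : Set X.carrier) (hS : IsDSemianalytic X S) :
    IsSubanalytic X S :=
  dSemianalytic_isSubanalytic_general K X S hS

end RigidQE
end
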